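/- arXiv:2601.08751 — 2 statements merged into one kernel-verified Lean document; each statement's English description precedes it below -/
import Mathlib

section
/- Let f : ℝⁿ → ℝ be differentiable and L-smooth (|f(x+η) − f(x) − ⟨∇f(x), η⟩| ≤ (L/2)‖η‖² for all x, η ∈ ℝⁿ). Fix x ∈ ℝⁿ, h > 0, and let {e₁,…,e_d} be an orthonormal family in ℝⁿ with d ≤ n. Define g = Σ_{l=1}^d ((f(x + h e_l) − f(x))/h) e_l and P the orthogonal projection onto span{e₁,…,e_d}. Then ‖g − P(∇f(x))‖ ≤ (L√d/2) h. -/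
open RealInnerProductSpace

theorem stmt_2 {n d : ℕ} (hdn : d ≤ n) (f : EuclideanSpace ℝ (Fin n) → ℝ) (L : ℝ) (hL : 0 < L)
    (hsmooth : ∀ x η : EuclideanSpace ℝ (Fin n),
      |f (x + η) - f x - ⟪gradient f x, η⟫| ≤ L / 2 * ‖η‖ ^ 2)
    (x : EuclideanSpace ℝ (Fin n)) (h : ℝ) (hh : 0 < h)
    (e : Fin d → EuclideanSpace ℝ (Fin n)) (he : Orthonormal ℝ e)
    (g : EuclideanSpace ℝ (Fin n))
    (hg : g = ∑ l : Fin d, ((f (x + h • e l) - f x) / h) • e l) :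
    ‖g - (Submodule.orthogonalProjectionOnto (Submodule.span ℝ (Set.range e)) (gradient f x) :
      EuclideanSpace ℝ (Fin n))‖ ≤ L * Real.sqrt d / 2 * h := by
  set G := gradient f x with hG
  set K := Submodule.span ℝ (Set.range e) with hK
  have hmem : ∀ l, e l ∈ K := fun l => Submodule.subset_span ⟨l, rfl⟩
  -- projection formula
  have hproj : (Submodule.orthogonalProjectionOnto K G : EuclideanSpace ℝ (Fin n))
      = ∑ l : Fin d, ⟪G, e l⟫ • e l := by
    rw [Submodule.coe_orthogonalProjectionOnto_apply]
    apply Submodule.eq_starProjection_of_mem_of_inner_eq_zero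
    · exact Submodule.sum_mem _ fun l _ => Submodule.smul_mem _ _ (hmem l)
    · intro w hw
      induction hw using Submodule.span_induction with
      | mem w hw =>
        obtain ⟨i, rfl⟩ := hw
        rw [inner_sub_left, he.inner_left_fintype]
        simp
      | zero => simp
      | add a b _ _ ha hb => rw [inner_add_right, ha, hb, add_zero]
      | smul c a _ ha => rw [inner_smul_right, ha, mul_zero]
  set c : Fin d → ℝ := fun l => (f (x + h • e l) - f x) / h - ⟪G, e l⟫ with hc
  have hdiff : g - (Submodule.orthogonalProjectionOnto K G : EuclideanSpace ℝ (Fin n))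
      = ∑ l : Fin d, c l • e l := by
    rw [hg, hproj, ← Finset.sum_sub_distrib]
    congr 1; ext l; rw [hc, sub_smul]
  have hcbound : ∀ l, |c l| ≤ L / 2 * h := by
    intro l
    have hs := hsmooth x (h • e l)
    rw [norm_smul, he.1 l] at hs
    have : c l = (f (x + h • e l) - f x - ⟪G, h • e l⟫) / h := by
      rw [hc, real_inner_smul_right]
      field_simp
    rw [this, abs_div, abs_of_pos hh, div_le_iff₀ hh]
    calc |f (x + h • e l) - f x - ⟪G, h • e l⟫| ≤ L / 2 * (‖h‖ * 1) ^ 2 := hs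
      _ = L / 2 * h * h := by rw [Real.norm_eq_abs, abs_of_pos hh]; ring
  have hnormsq : ‖∑ l : Fin d, c l • e l‖ ^ 2 = ∑ l : Fin d, (c l) ^ 2 := by
    rw [← real_inner_self_eq_norm_sq, he.inner_sum]
    simp [sq]
  have hsum : ∑ l : Fin d, (c l) ^ 2 ≤ (d : ℝ) * (L / 2 * h) ^ 2 := by
    calc ∑ l : Fin d, (c l) ^ 2 ≤ ∑ _l : Fin d, (L / 2 * h) ^ 2 := by
          apply Finset.sum_le_sum
          intro l _
          have := hcbound l
          calc (c l) ^ 2 = |c l| ^ 2 := (sq_abs _).symm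
            _ ≤ (L / 2 * h) ^ 2 := pow_le_pow_left₀ (abs_nonneg _) this 2
      _ = (d : ℝ) * (L / 2 * h) ^ 2 := by simp [Finset.sum_const]
  rw [hdiff]
  have hnn : (0:ℝ) ≤ L * Real.sqrt d / 2 * h := by positivity
  nlinarith [norm_nonneg (∑ l : Fin d, c l • e l), Real.sq_sqrt (Nat.cast_nonneg d : (0:ℝ) ≤ d),
    Real.sqrt_nonneg (d:ℝ), hnormsq, hsum, sq_nonneg (‖∑ l : Fin d, c l • e l‖ - L * Real.sqrt d / 2 * h)]
end

section
/- Let f : ℝⁿ → ℝ be L-smooth with L > 0 and bounded below by f_low, let ε > 0, x ∈ ℝⁿ with ‖∇f(x)‖ > ε, and let g ∈ ℝⁿ satisfy ‖∇f(x) − g‖ ≤ ε/5. Then for any σ ≥ L, the point x⁺ = x − (1/σ)g satisfies f(x) − f(x⁺) ≥ (4ε²)/(25σ). -/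
open RealInnerProductSpace

theorem stmt_14 {n : ℕ} (f : EuclideanSpace ℝ (Fin n) → ℝ) (L : ℝ) (hL : 0 < L)
    (hsmooth : ∀ x η : EuclideanSpace ℝ (Fin n),
      |f (x + η) - f x - ⟪gradient f x, η⟫| ≤ L / 2 * ‖η‖ ^ 2)
    (flow : ℝ) (hlow : ∀ x, f x ≥ flow)
    (ε : ℝ) (hε : 0 < ε) (x : EuclideanSpace ℝ (Fin n)) (hx : ε < ‖gradient f x‖)
    (g : EuclideanSpace ℝ (Fin n)) (hg : ‖gradient f x - g‖ ≤ ε / 5)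
    (σ : ℝ) (hσ : σ ≥ L) :
    f x - f (x - (1 / σ) • g) ≥ 4 * ε ^ 2 / (25 * σ) := by
  have hσ0 : 0 < σ := lt_of_lt_of_le hL hσ
  set G := gradient f x with hG
  set a := ‖g‖ with ha
  have ha0 : 0 ≤ a := norm_nonneg g
  -- lower bound on ‖g‖
  have hga : ‖G‖ - a ≤ ε / 5 := le_trans (norm_sub_norm_le G g) hg
  have halb : 4 * ε / 5 ≤ a := by linarith
  -- inner product bound
  have hinner : ⟪G, g⟫ ≥ a ^ 2 - (ε / 5) * a := by
    have h1 : ⟪G, g⟫ = ⟪g, g⟫ + ⟪G - g, g⟫ := by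
      rw [inner_sub_left]; ring
    have h2 : ⟪g, g⟫ = a ^ 2 := by
      rw [real_inner_self_eq_norm_sq]
    have h3 : |⟪G - g, g⟫| ≤ ‖G - g‖ * ‖g‖ := abs_real_inner_le_norm _ _
    have h4 : ⟪G - g, g⟫ ≥ -((ε / 5) * a) := by
      have := neg_abs_le ⟪G - g, g⟫
      have h5 : ‖G - g‖ * ‖g‖ ≤ (ε / 5) * a :=
        mul_le_mul_of_nonneg_right hg ha0
      linarith
    linarith [h1, h2, h4]
  -- smoothness applied
  have hsm := hsmooth x (-((1 / σ) • g))
  have hpt : x + -((1 / σ) • g) = x - (1 / σ) • g := by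
    rw [sub_eq_add_neg]
  rw [hpt] at hsm
  have hin : ⟪G, -((1 / σ) • g)⟫ = -(1 / σ * ⟪G, g⟫) := by
    rw [inner_neg_right, real_inner_smul_right]
  rw [hin] at hsm
  have hnrm : ‖-((1 / σ) • g)‖ = (1 / σ) * a := by
    rw [norm_neg, norm_smul, Real.norm_eq_abs, abs_of_pos (by positivity : (0:ℝ) < 1 / σ)]
  rw [hnrm] at hsm
  have habs := abs_le.mp hsm
  have key : f x - f (x - (1 / σ) • g) ≥
      1 / σ * ⟪G, g⟫ - L / 2 * ((1 / σ) * a) ^ 2 := by linarith [habs.2]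
  -- final arithmetic
  have hL2 : L / 2 * ((1 / σ) * a) ^ 2 ≤ 1 / (2 * σ) * a ^ 2 := by
    rw [div_mul_eq_mul_div, mul_pow]
    have : L * ((1 / σ) ^ 2 * a ^ 2) ≤ σ * ((1 / σ) ^ 2 * a ^ 2) :=
      mul_le_mul_of_nonneg_right hσ (by positivity)
    calc L * ((1 / σ) ^ 2 * a ^ 2) / 2 ≤ σ * ((1 / σ) ^ 2 * a ^ 2) / 2 := by linarith
      _ = 1 / (2 * σ) * a ^ 2 := by field_simp
  have h6 : 1 / σ * ⟪G, g⟫ ≥ 1 / σ * (a ^ 2 - (ε / 5) * a) :=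
    mul_le_mul_of_nonneg_left hinner (by positivity)
  have h7 : 1 / σ * (a ^ 2 - (ε / 5) * a) - 1 / (2 * σ) * a ^ 2 ≥ 4 * ε ^ 2 / (25 * σ) := by
    rw [ge_iff_le, div_le_iff₀ (by positivity : (0:ℝ) < 25 * σ)]
    have expand : (1 / σ * (a ^ 2 - (ε / 5) * a) - 1 / (2 * σ) * a ^ 2) * (25 * σ)
        = 25 * (a ^ 2 / 2 - (ε / 5) * a) := by field_simp; ring
    rw [expand]
    nlinarith [mul_nonneg (sub_nonneg.mpr halb) (by linarith : (0:ℝ) ≤ a + 2 * ε / 5)]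
  linarith
end
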